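/- arXiv:2005.01650 — 2 statements merged into one kernel-verified Lean document; each statement's English description precedes it below -/
import Mathlib

section
/- For every ε > 0, t > 0 and x ∈ ℝ, one has ∫_ℝ R_ε(t,x,y)² dy ≤ √(3/(8π)) · t^{−1/2}. -/
/-!
Write `λ = t/ε`. Squaring the series and integrating term by term, the Gaussian identity
`∫ G(s,x,y) G(r,x,y) dy = (2π(s+r))^{-1/2}` turns `∫ R_ε²` into
`e^{-2λ} ∑_{n,m ≥ 1} λ^{n+m}/(n! m!) · (2π(n+m)ε)^{-1/2}`. Grouped by `N = n + m`, the
binomial theorem bounds the coefficients by `(2λ)^N/N!`, which leaves a Poisson moment of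
`N^{-1/2}`: for `N ≥ 2` and `μ > 0`, AM-GM gives
`N^{-1/2} ≤ √(3/2) (N+1)^{-1/2} ≤ √(3/2) (μ/(N+1) + 1)/(2√μ)`, and
`∑ μ^N/N! (μ/(N+1) + 1) ≤ 2e^μ`. With `μ = 2λ` this gives
`√(3/2)/√(2πε · 2λ) = √(3/(8πt))`.
-/

open MeasureTheory Real

/-- The Gaussian heat kernel `G(t,x,y) = (2πt)^{-1/2} exp(-(x-y)²/(2t))` for `t > 0`,
and `0` for `t ≤ 0`. -/
noncomputable def heatKernel (t x y : ℝ) : ℝ :=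
  if 0 < t then (1 / Real.sqrt (2 * Real.pi * t)) * Real.exp (-(x - y) ^ 2 / (2 * t)) else 0

/-- `R_ε(t,x,y) = e^{-t/ε} ∑_{n=1}^∞ ((t/ε)^n / n!) G(nε, x, y)`. -/
noncomputable def Reps (ε t x y : ℝ) : ℝ :=
  Real.exp (-t / ε) *
    ∑' n : ℕ, ((t / ε) ^ (n + 1) / (Nat.factorial (n + 1) : ℝ)) *
      heatKernel (((n : ℝ) + 1) * ε) x y

open Finset
open ENNReal (ofReal)
open scoped ENNReal Nat

theorem sum_antidiagonal_pow_div_factorial {K : Type*} [Field K] [CharZero K] (x y : K) (n : ℕ) :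
    ∑ p ∈ antidiagonal n, x ^ p.1 / p.1 ! * (y ^ p.2 / p.2 !) = (x + y) ^ n / n ! := by
  rw [(Commute.all x y).add_pow', Finset.sum_div]
  refine Finset.sum_congr rfl fun p hp => ?_
  rw [← mem_antidiagonal.mp hp, nsmul_eq_mul, Nat.cast_add_choose]
  have := (p.1 + p.2).factorial_ne_zero
  field_simp

theorem sum_antidiagonal_pow_succ_div_factorial_le {x : ℝ} (hx : 0 ≤ x) (n : ℕ) :
    ∑ p ∈ antidiagonal n, x ^ (p.1 + 1) / (p.1 + 1)! * (x ^ (p.2 + 1) / (p.2 + 1)!)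
      ≤ (2 * x) ^ (n + 2) / (n + 2)! := by
  -- `antidiagonal (n + 2)` is the shifted `antidiagonal n` plus the two pairs with a zero entry
  rw [two_mul, ← sum_antidiagonal_pow_div_factorial, Nat.sum_antidiagonal_succ,
    Nat.sum_antidiagonal_succ']
  have : 0 ≤ x ^ 0 / (0 : ℕ)! * (x ^ (n + 2) / (n + 2)!) := by positivity
  have : 0 ≤ x ^ (n + 1 + 1) / (n + 1 + 1)! * (x ^ 0 / (0 : ℕ)!) := by positivity
  linarith

theorem tsum_ofReal_pow_add_div_factorial_le {x : ℝ} (hx : 0 ≤ x) (j : ℕ) :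
    ∑' k, ofReal (x ^ (k + j) / (k + j)!) ≤ ofReal (exp x) := by
  rw [Real.exp_eq_exp_ℝ, NormedSpace.exp_eq_tsum_div,
    ENNReal.ofReal_tsum_of_nonneg (fun n => by positivity) (Real.summable_pow_div_factorial x)]
  exact ENNReal.tsum_comp_le_tsum_of_injective (add_left_injective j)
    fun n => ofReal (x ^ n / n !)

theorem inv_sqrt_le_of_two_le {k μ : ℝ} (hk : 2 ≤ k) (hμ : 0 < μ) :
    1 / √k ≤ √(3 / 2) / (2 * √μ) * (μ / (k + 1) + 1) := by
  have hk1 : 0 < k + 1 := by linarith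
  have hsk : 0 < √k := Real.sqrt_pos.2 (by linarith)
  have hsk1 : 0 < √(k + 1) := Real.sqrt_pos.2 hk1
  have hsμ : 0 < √μ := Real.sqrt_pos.2 hμ
  have hgrow : 1 / √k ≤ √(3 / 2) / √(k + 1) := by
    rw [div_le_div_iff₀ hsk hsk1, one_mul, ← Real.sqrt_mul (by norm_num)]
    exact Real.sqrt_le_sqrt (by linarith)
  -- AM-GM: `2 √μ √(k+1) ≤ μ + (k+1)`
  have hamgm : 1 / √(k + 1) ≤ (μ / (k + 1) + 1) / (2 * √μ) := by
    rw [div_le_div_iff₀ hsk1 (by positivity), div_add_one hk1.ne', div_mul_eq_mul_div,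
      le_div_iff₀ hk1, one_mul]
    nlinarith [sq_nonneg (√μ - √(k + 1)), Real.sq_sqrt hμ.le, Real.sq_sqrt hk1.le]
  calc 1 / √k ≤ √(3 / 2) * (1 / √(k + 1)) := by rwa [mul_one_div]
    _ ≤ √(3 / 2) * ((μ / (k + 1) + 1) / (2 * √μ)) := by gcongr
    _ = √(3 / 2) / (2 * √μ) * (μ / (k + 1) + 1) := by ring

theorem pow_div_factorial_div_sqrt_le {μ : ℝ} (hμ : 0 < μ) {k : ℕ} (hk : 2 ≤ k) :
    μ ^ k / k ! / √k
      ≤ √(3 / 2) / (2 * √μ) * (μ ^ (k + 1) / (k + 1)! + μ ^ k / k !) := by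
  have hsplit : μ ^ (k + 1) / (k + 1)! + μ ^ k / k ! = μ ^ k / k ! * (μ / (k + 1) + 1) := by
    rw [pow_succ, Nat.factorial_succ, Nat.cast_mul]
    push_cast
    field_simp
  rw [hsplit, div_eq_mul_one_div (μ ^ k / k !), mul_left_comm]
  gcongr
  exact inv_sqrt_le_of_two_le (by exact_mod_cast hk) hμ

theorem tsum_ofReal_pow_div_factorial_div_sqrt_le {μ : ℝ} (hμ : 0 < μ) :
    ∑' k, ofReal (μ ^ (k + 2) / (k + 2)! / √(k + 2 : ℕ))
      ≤ ofReal (√(3 / 2) * exp μ / √μ) := by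
  set c := √(3 / 2) / (2 * √μ)
  calc ∑' k, ofReal (μ ^ (k + 2) / (k + 2)! / √(k + 2 : ℕ))
      ≤ ∑' k, ofReal c * (ofReal (μ ^ (k + 1 + 2) / (k + 1 + 2)!)
          + ofReal (μ ^ (k + 2) / (k + 2)!)) := by
        refine ENNReal.tsum_le_tsum fun k => ?_
        rw [← ENNReal.ofReal_add (by positivity) (by positivity),
          ← ENNReal.ofReal_mul (by positivity)]
        exact ENNReal.ofReal_le_ofReal (pow_div_factorial_div_sqrt_le hμ (by omega))
    _ = ofReal c * (∑' k, ofReal (μ ^ (k + 3) / (k + 3)!)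
          + ∑' k, ofReal (μ ^ (k + 2) / (k + 2)!)) := by
        rw [ENNReal.tsum_mul_left, ENNReal.tsum_add]
    _ ≤ ofReal c * (ofReal (exp μ) + ofReal (exp μ)) := by
        gcongr <;> exact tsum_ofReal_pow_add_div_factorial_le hμ.le _
    _ = ofReal (√(3 / 2) * exp μ / √μ) := by
        rw [← ENNReal.ofReal_add (by positivity) (by positivity),
          ← ENNReal.ofReal_mul (by positivity)]
        congr 1
        simp only [c]
        field_simp
        ring

theorem ENNReal.tsum_tsum_eq_tsum_sum_antidiagonal (g : ℕ → ℕ → ℝ≥0∞) :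
    ∑' n, ∑' m, g n m = ∑' n, ∑ p ∈ antidiagonal n, g p.1 p.2 := by
  rw [← ENNReal.tsum_prod, ← HasAntidiagonal.sigmaAntidiagonalEquivProd.tsum_eq,
    ENNReal.tsum_sigma']
  exact tsum_congr fun n => Finset.tsum_subtype (antidiagonal n) fun p => g p.1 p.2

theorem lintegral_tsum_sq {α : Type*} [MeasurableSpace α] {μ : Measure α}
    {f : ℕ → α → ℝ≥0∞} (hf : ∀ n, AEMeasurable (f n) μ) :
    ∫⁻ a, (∑' n, f n a) ^ 2 ∂μ
      = ∑' n, ∑ p ∈ antidiagonal n, ∫⁻ a, f p.1 a * f p.2 a ∂μ := by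
  have hprod : ∀ n m, AEMeasurable (fun a => f n a * f m a) μ := fun n m => (hf n).mul (hf m)
  simp_rw [sq, ← ENNReal.tsum_mul_right, ← ENNReal.tsum_mul_left]
  rw [lintegral_tsum fun n => AEMeasurable.tsum fun m => hprod n m,
    ← ENNReal.tsum_tsum_eq_tsum_sum_antidiagonal fun n m => ∫⁻ a, f n a * f m a ∂μ]
  exact tsum_congr fun n => lintegral_tsum fun m => hprod n m

theorem ENNReal.ofReal_tsum_le {ι : Type*} {f : ι → ℝ} (hf : ∀ i, 0 ≤ f i) :
    ofReal (∑' i, f i) ≤ ∑' i, ofReal (f i) := by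
  by_cases h : Summable f
  · exact (ENNReal.ofReal_tsum_of_nonneg hf h).le
  · simp [tsum_eq_zero_of_not_summable h]

theorem heatKernel_of_pos {t : ℝ} (ht : 0 < t) (x y : ℝ) :
    heatKernel t x y = 1 / √(2 * π * t) * exp (-(x - y) ^ 2 / (2 * t)) :=
  if_pos ht

theorem heatKernel_nonneg (t x y : ℝ) : 0 ≤ heatKernel t x y := by
  unfold heatKernel
  split_ifs <;> positivity

theorem measurable_heatKernel (t x : ℝ) : Measurable (heatKernel t x) := by
  unfold heatKernel
  split_ifs <;> fun_prop

theorem heatKernel_mul_heatKernel {s r : ℝ} (hs : 0 < s) (hr : 0 < r) (x y : ℝ) :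
    heatKernel s x y * heatKernel r x y
      = 1 / √(2 * π * s) * (1 / √(2 * π * r))
        * exp (-((s + r) / (2 * s * r)) * (x - y) ^ 2) := by
  rw [heatKernel_of_pos hs, heatKernel_of_pos hr, mul_mul_mul_comm, ← Real.exp_add]
  congr 2
  field_simp
  ring

theorem integral_heatKernel_mul_heatKernel {s r : ℝ} (hs : 0 < s) (hr : 0 < r) (x : ℝ) :
    ∫ y, heatKernel s x y * heatKernel r x y = 1 / √(2 * π * (s + r)) := by
  simp_rw [heatKernel_mul_heatKernel hs hr]
  rw [integral_const_mul,
    integral_sub_left_eq_self (fun z => exp (-((s + r) / (2 * s * r)) * z ^ 2)), integral_gaussian]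
  have := Real.pi_pos
  rw [one_div, one_div, one_div, ← Real.sqrt_inv, ← Real.sqrt_inv, ← Real.sqrt_inv,
    ← Real.sqrt_mul (by positivity), ← Real.sqrt_mul (by positivity)]
  congr 1
  field_simp

theorem lintegral_heatKernel_mul_heatKernel {s r : ℝ} (hs : 0 < s) (hr : 0 < r) (x : ℝ) :
    ∫⁻ y, ofReal (heatKernel s x y) * ofReal (heatKernel r x y)
      = ofReal (1 / √(2 * π * (s + r))) := by
  have hint : Integrable (fun y => heatKernel s x y * heatKernel r x y) := by
    simp_rw [heatKernel_mul_heatKernel hs hr]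
    exact ((integrable_exp_neg_mul_sq (by positivity)).comp_sub_left x).const_mul _
  simp_rw [← ENNReal.ofReal_mul (heatKernel_nonneg _ _ _)]
  rw [← ofReal_integral_eq_lintegral_ofReal hint
    (Filter.Eventually.of_forall fun y => mul_nonneg (heatKernel_nonneg _ _ _)
      (heatKernel_nonneg _ _ _)), integral_heatKernel_mul_heatKernel hs hr]

theorem lintegral_heatKernel_mul_heatKernel_antidiagonal {ε : ℝ} (hε : 0 < ε) (x : ℝ)
    {n : ℕ} {p : ℕ × ℕ} (hp : p ∈ antidiagonal n) :
    ∫⁻ y, ofReal (heatKernel ((p.1 + 1) * ε) x y) * ofReal (heatKernel ((p.2 + 1) * ε) x y)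
      = ofReal (1 / √(2 * π * ε) / √(n + 2 : ℕ)) := by
  rw [lintegral_heatKernel_mul_heatKernel (by positivity) (by positivity),
    ← mem_antidiagonal.mp hp, div_div, ← Real.sqrt_mul (by positivity)]
  push_cast
  ring_nf

theorem ofReal_Reps_sq_le {ε t : ℝ} (h : 0 ≤ t / ε) (x y : ℝ) :
    ofReal (Reps ε t x y ^ 2) ≤ ofReal (exp (-t / ε)) ^ 2 * (∑' n : ℕ,
      ofReal ((t / ε) ^ (n + 1) / (n + 1)!) * ofReal (heatKernel ((n + 1) * ε) x y)) ^ 2 := by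
  have ha : ∀ n : ℕ, 0 ≤ (t / ε) ^ (n + 1) / (n + 1)! := fun n => by positivity
  have hterm := fun n : ℕ => mul_nonneg (ha n) (heatKernel_nonneg ((n + 1) * ε) x y)
  rw [Reps, mul_pow, ENNReal.ofReal_mul (by positivity), ENNReal.ofReal_pow (exp_nonneg _),
    ENNReal.ofReal_pow (tsum_nonneg hterm)]
  gcongr
  refine (ENNReal.ofReal_tsum_le hterm).trans_eq ?_
  simp_rw [ENNReal.ofReal_mul (ha _)]

theorem lintegral_Reps_sq_le_tsum {ε t : ℝ} (hε : 0 < ε) (ht : 0 ≤ t) (x : ℝ) :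
    ∫⁻ y, ofReal (Reps ε t x y ^ 2)
      ≤ ofReal (exp (-t / ε)) ^ 2 * ofReal (1 / √(2 * π * ε))
        * ∑' n, ofReal ((2 * (t / ε)) ^ (n + 2) / (n + 2)! / √(n + 2 : ℕ)) := by
  have ha : ∀ n : ℕ, 0 ≤ (t / ε) ^ (n + 1) / (n + 1)! := fun n => by positivity
  set F : ℕ → ℝ → ℝ≥0∞ := fun n y => ofReal ((t / ε) ^ (n + 1) / (n + 1)!)
    * ofReal (heatKernel ((n + 1) * ε) x y)
  have hF : ∀ n, Measurable (F n) := fun n =>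
    measurable_const.mul (measurable_heatKernel _ x).ennreal_ofReal
  have hcross : ∀ n : ℕ, ∀ p ∈ antidiagonal n, ∫⁻ y, F p.1 y * F p.2 y
      = ofReal ((t / ε) ^ (p.1 + 1) / (p.1 + 1)! * ((t / ε) ^ (p.2 + 1) / (p.2 + 1)!))
        * ofReal (1 / √(2 * π * ε) / √(n + 2 : ℕ)) := by
    intro n p hp
    simp_rw [F, mul_mul_mul_comm]
    rw [lintegral_const_mul' _ _ (by finiteness),
      lintegral_heatKernel_mul_heatKernel_antidiagonal hε x hp, ENNReal.ofReal_mul (ha _)]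
  calc ∫⁻ y, ofReal (Reps ε t x y ^ 2)
      ≤ ∫⁻ y, ofReal (exp (-t / ε)) ^ 2 * (∑' n, F n y) ^ 2 :=
        lintegral_mono fun y => ofReal_Reps_sq_le (by positivity) x y
    _ = ofReal (exp (-t / ε)) ^ 2
          * ∑' n, ∑ p ∈ antidiagonal n, ∫⁻ y, F p.1 y * F p.2 y := by
      rw [lintegral_const_mul' _ _ (by finiteness), lintegral_tsum_sq fun n => (hF n).aemeasurable]
    _ = ofReal (exp (-t / ε)) ^ 2 * ∑' n, ofReal (∑ p ∈ antidiagonal n,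
          (t / ε) ^ (p.1 + 1) / (p.1 + 1)! * ((t / ε) ^ (p.2 + 1) / (p.2 + 1)!))
          * ofReal (1 / √(2 * π * ε) / √(n + 2 : ℕ)) := by
      congr 1
      refine tsum_congr fun n => ?_
      rw [Finset.sum_congr rfl (hcross n), ← Finset.sum_mul,
        ENNReal.ofReal_sum_of_nonneg fun p _ => mul_nonneg (ha _) (ha _)]
    _ ≤ ofReal (exp (-t / ε)) ^ 2 * ∑' n, ofReal ((2 * (t / ε)) ^ (n + 2) / (n + 2)!)
          * ofReal (1 / √(2 * π * ε) / √(n + 2 : ℕ)) := by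
      gcongr with n
      exact sum_antidiagonal_pow_succ_div_factorial_le (by positivity) n
    _ = ofReal (exp (-t / ε)) ^ 2 * ofReal (1 / √(2 * π * ε))
        * ∑' n, ofReal ((2 * (t / ε)) ^ (n + 2) / (n + 2)! / √(n + 2 : ℕ)) := by
      rw [mul_assoc (ofReal (exp (-t / ε)) ^ 2),
        ← ENNReal.tsum_mul_left (a := ofReal (1 / √(2 * π * ε)))]
      congr 1
      refine tsum_congr fun n => ?_
      rw [← ENNReal.ofReal_mul (by positivity), ← ENNReal.ofReal_mul (by positivity)]
      ring_nf

theorem lintegral_Reps_sq_le {ε t : ℝ} (hε : 0 < ε) (ht : 0 < t) (x : ℝ) :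
    ∫⁻ y, ofReal (Reps ε t x y ^ 2) ≤ ofReal (√(3 / (8 * π)) * t ^ (-(1 : ℝ) / 2)) := by
  have hconst : exp (-t / ε) ^ 2 * (1 / √(2 * π * ε))
        * (√(3 / 2) * exp (2 * (t / ε)) / √(2 * (t / ε)))
      = √(3 / (8 * π)) * t ^ (-(1 : ℝ) / 2) := by
    have hexp : exp (-t / ε) ^ 2 * exp (2 * (t / ε)) = 1 := by
      rw [← Real.exp_nat_mul, ← Real.exp_add]
      ring_nf
      exact exp_zero
    have hsqrt : √(2 * π * ε) * √(2 * (t / ε)) = √(4 * π * t) := by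
      rw [← Real.sqrt_mul (by positivity)]
      congr 1
      field_simp
      ring
    have hrpow : t ^ (-(1 : ℝ) / 2) = 1 / √t := by
      rw [neg_div, Real.rpow_neg ht.le, ← Real.sqrt_eq_rpow, one_div]
    calc _ = (exp (-t / ε) ^ 2 * exp (2 * (t / ε)))
            * (√(3 / 2) / (√(2 * π * ε) * √(2 * (t / ε)))) := by ring
      _ = √(3 / 2 / (4 * π * t)) := by
          rw [hexp, one_mul, hsqrt, Real.sqrt_div' (3 / 2) (by positivity : 0 ≤ 4 * π * t)]
      _ = √(3 / (8 * π) / t) := by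
          congr 1
          field_simp
          ring
      _ = _ := by rw [Real.sqrt_div' _ ht.le, hrpow, mul_one_div]
  calc ∫⁻ y, ofReal (Reps ε t x y ^ 2)
      ≤ ofReal (exp (-t / ε)) ^ 2 * ofReal (1 / √(2 * π * ε))
        * ∑' n, ofReal ((2 * (t / ε)) ^ (n + 2) / (n + 2)! / √(n + 2 : ℕ)) :=
      lintegral_Reps_sq_le_tsum hε ht.le x
    _ ≤ ofReal (exp (-t / ε)) ^ 2 * ofReal (1 / √(2 * π * ε))
        * ofReal (√(3 / 2) * exp (2 * (t / ε)) / √(2 * (t / ε))) := by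
      gcongr
      exact tsum_ofReal_pow_div_factorial_div_sqrt_le (by positivity)
    _ = _ := by
      rw [← hconst, ← ENNReal.ofReal_pow (exp_nonneg _), ← ENNReal.ofReal_mul (by positivity),
        ← ENNReal.ofReal_mul (by positivity)]

/-- For every `ε > 0`, `t > 0` and `x ∈ ℝ`,
`∫_ℝ R_ε(t,x,y)² dy ≤ √(3/(8π)) · t^{-1/2}`. -/
theorem Reps_sq_integral_le :
    ∀ ε > (0 : ℝ), ∀ t > (0 : ℝ), ∀ x : ℝ,
      (∫ y : ℝ, (Reps ε t x y) ^ 2) ≤ Real.sqrt (3 / (8 * Real.pi)) * t ^ (-(1:ℝ)/2) := by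
  intro ε hε t ht x
  rw [← ENNReal.ofReal_le_ofReal_iff (by positivity),
    ← enorm_eq_ofReal (integral_nonneg fun y => sq_nonneg _)]
  calc ‖∫ y, Reps ε t x y ^ 2‖ₑ
      ≤ ∫⁻ y, ‖Reps ε t x y ^ 2‖ₑ := enorm_integral_le_lintegral_enorm _
    _ = ∫⁻ y, ofReal (Reps ε t x y ^ 2) := by simp_rw [enorm_eq_ofReal (sq_nonneg _)]
    _ ≤ _ := lintegral_Reps_sq_le hε ht x
end

section
/- Let T > 0 and C ≥ 0, and let f : [0,T] → [0,∞) be bounded and measurable with f(t) ≤ C·∫₀ᵗ (t−s)^{−1/2}·f(s) ds for all t ∈ [0,T]. Then f(t) = 0 for all t ∈ [0,T]. -/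
/-!
The kernel has mass `∫ₐˣ (x - s)^(-1/2) ds = 2 √(x - a)`. So if `f` already vanishes on `[0, a]`,
the inequality on `[a, b]` reads `sup_[a,b] f ≤ 2 C √(b - a) · sup_[a,b] f`, which forces `f = 0`
on `[a, b]` as soon as `2 C √(b - a) < 1`. Steps of a fixed such length `δ` cover `[0, T]`.
-/

open MeasureTheory Set

theorem intervalIntegrable_sub_rpow {r : ℝ} (hr : -1 < r) (x a b : ℝ) :
    IntervalIntegrable (fun s : ℝ => (x - s) ^ r) volume a b := by
  simpa using
    ((intervalIntegral.intervalIntegrable_rpow' (a := x - b) (b := x - a) hr).comp_sub_left x).symm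

theorem intervalIntegrable_sub_rpow_mul {r : ℝ} (hr : -1 < r) {f : ℝ → ℝ}
    (hf : AEStronglyMeasurable f volume) {M : ℝ} (hM : ∀ s, ‖f s‖ ≤ M) (x a b : ℝ) :
    IntervalIntegrable (fun s : ℝ => (x - s) ^ r * f s) volume a b := by
  rw [intervalIntegrable_iff]
  exact (intervalIntegrable_sub_rpow hr x a b).def'.mul_bdd hf.restrict (ae_of_all _ hM)

theorem integral_sub_rpow_neg_half (a x : ℝ) :
    ∫ s in a..x, (x - s) ^ (-(1:ℝ)/2) = 2 * √(x - a) := by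
  rw [intervalIntegral.integral_comp_sub_left (fun u : ℝ => u ^ (-(1:ℝ)/2)) x, sub_self,
    integral_rpow (Or.inl (by norm_num)), Real.sqrt_eq_rpow,
    show -(1:ℝ)/2 + 1 = 1/2 by norm_num, Real.zero_rpow (by norm_num)]
  ring

theorem intervalIntegral.integral_eq_integral_of_eqOn_zero {E : Type*} [NormedAddCommGroup E]
    [NormedSpace ℝ E] {μ : Measure ℝ} {g : ℝ → E} {c a x : ℝ} (hg : EqOn g 0 (uIcc c a))
    (hca : IntervalIntegrable g μ c a) (hax : IntervalIntegrable g μ a x) :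
    ∫ s in c..x, g s ∂μ = ∫ s in a..x, g s ∂μ := by
  rw [← intervalIntegral.integral_add_adjacent_intervals hca hax,
    intervalIntegral.integral_congr hg]
  simp

theorem eqOn_zero_of_bound_self_improving {α : Type*} {s : Set α} {f : α → ℝ} {q : ℝ}
    (hq : q < 1) (hf : ∀ x ∈ s, 0 ≤ f x) (hbdd : BddAbove (f '' s))
    (himp : ∀ K, (∀ x ∈ s, f x ≤ K) → ∀ x ∈ s, f x ≤ q * K) :
    ∀ x ∈ s, f x = 0 := by
  intro x hx
  have hle : ∀ y ∈ s, f y ≤ sSup (f '' s) := fun y hy => le_csSup hbdd (mem_image_of_mem f hy)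
  have hsup : sSup (f '' s) ≤ q * sSup (f '' s) :=
    csSup_le ⟨f x, mem_image_of_mem f hx⟩ (forall_mem_image.2 (himp _ hle))
  nlinarith [hf x hx, hle x hx]

section SingularVolterra

variable {f : ℝ → ℝ} {C a b M : ℝ}

theorem eqOn_Icc_zero_of_le_singular_integral (hC : 0 ≤ C) (hsmall : 2 * C * √(b - a) < 1)
    (hf : Measurable f) (hf0 : ∀ x, 0 ≤ f x) (hM : ∀ x, ‖f x‖ ≤ M)
    (hineq : ∀ x ∈ Icc a b, f x ≤ C * ∫ s in a..x, (x - s) ^ (-(1:ℝ)/2) * f s) :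
    ∀ x ∈ Icc a b, f x = 0 := by
  refine eqOn_zero_of_bound_self_improving hsmall (fun x _ => hf0 x)
    ⟨M, forall_mem_image.2 fun x _ => (Real.le_norm_self _).trans (hM x)⟩ fun K hK x hx => ?_
  have hK0 : 0 ≤ K := (hf0 x).trans (hK x hx)
  calc f x ≤ C * ∫ s in a..x, (x - s) ^ (-(1:ℝ)/2) * f s := hineq x hx
    _ ≤ C * ∫ s in a..x, (x - s) ^ (-(1:ℝ)/2) * K := by
      gcongr
      refine intervalIntegral.integral_mono_on hx.1
        (intervalIntegrable_sub_rpow_mul (by norm_num) hf.aestronglyMeasurable hM x a x)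
        ((intervalIntegrable_sub_rpow (by norm_num) x a x).mul_const K) fun s hs => ?_
      exact mul_le_mul_of_nonneg_left (hK s ⟨hs.1, hs.2.trans hx.2⟩)
        (Real.rpow_nonneg (sub_nonneg.2 hs.2) _)
    _ = 2 * C * √(x - a) * K := by
      rw [intervalIntegral.integral_mul_const, integral_sub_rpow_neg_half]
      ring
    _ ≤ 2 * C * √(b - a) * K := by gcongr; exact hx.2

theorem eqOn_Icc_zero_extend (hC : 0 ≤ C) (hsmall : 2 * C * √(b - a) < 1)
    (hf : Measurable f) (hf0 : ∀ x, 0 ≤ f x) (hM : ∀ x, ‖f x‖ ≤ M) (ha : 0 ≤ a)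
    (hzero : ∀ t ∈ Icc 0 a, f t = 0)
    (hineq : ∀ x ∈ Icc a b, f x ≤ C * ∫ s in (0:ℝ)..x, (x - s) ^ (-(1:ℝ)/2) * f s) :
    ∀ t ∈ Icc 0 b, f t = 0 := by
  have hab : ∀ x ∈ Icc a b, f x = 0 := by
    refine eqOn_Icc_zero_of_le_singular_integral hC hsmall hf hf0 hM fun x hx => ?_
    have hint := intervalIntegrable_sub_rpow_mul (r := -(1:ℝ)/2) (by norm_num)
      hf.aestronglyMeasurable hM x
    rw [← intervalIntegral.integral_eq_integral_of_eqOn_zero _ (hint 0 a) (hint a x)]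
    · exact hineq x hx
    · intro s hs
      rw [uIcc_of_le ha] at hs
      simp [hzero s hs]
  intro t ht
  rcases le_total t a with h | h
  · exact hzero t ⟨ht.1, h⟩
  · exact hab t ⟨h, ht.2⟩

end SingularVolterra

theorem two_mul_mul_sqrt_lt_one {C d : ℝ} (hC : 0 ≤ C) (hd : d ≤ ((2 * C + 1) ^ 2)⁻¹) :
    2 * C * √d < 1 := by
  have : √d ≤ (2 * C + 1)⁻¹ := by
    simpa [Real.sqrt_inv, Real.sqrt_sq (by positivity : 0 ≤ 2 * C + 1)] using Real.sqrt_le_sqrt hd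
  calc 2 * C * √d ≤ 2 * C * (2 * C + 1)⁻¹ := by gcongr
    _ < 1 := by rw [← div_eq_mul_inv, div_lt_one (by positivity)]; linarith

/-- Singular Gronwall lemma: a bounded measurable `f : [0,T] → [0,∞)` satisfying
`f(t) ≤ C ∫₀ᵗ (t−s)^{−1/2} f(s) ds` on `[0,T]` vanishes identically on `[0,T]`. -/
theorem singular_gronwall
    (T C : ℝ) (hT : 0 < T) (hC : 0 ≤ C) (f : ℝ → ℝ)
    (hmeas : Measurable f) (hnonneg : ∀ t, 0 ≤ f t) (hbdd : ∃ M : ℝ, ∀ t, f t ≤ M)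
    (hineq : ∀ t ∈ Set.Icc (0 : ℝ) T,
      f t ≤ C * ∫ s in (0:ℝ)..t, (t - s) ^ (-(1:ℝ)/2) * f s) :
    ∀ t ∈ Set.Icc (0 : ℝ) T, f t = 0 := by
  obtain ⟨M, hM⟩ := hbdd
  have hnorm : ∀ s, ‖f s‖ ≤ M := fun s => (Real.norm_of_nonneg (hnonneg s)).trans_le (hM s)
  set δ : ℝ := ((2 * C + 1) ^ 2)⁻¹
  have hδ : 0 < δ := by positivity
  have hvanish : ∀ n : ℕ, ∀ t ∈ Icc 0 (min (n * δ) T), f t = 0 := by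
    intro n
    induction n with
    | zero =>
      simpa [hT.le] using eqOn_Icc_zero_of_le_singular_integral hC (by simp) hmeas hnonneg hnorm
        fun x hx => hineq x ⟨hx.1, hx.2.trans hT.le⟩
    | succ n ih =>
      refine eqOn_Icc_zero_extend hC (two_mul_mul_sqrt_lt_one hC ?_) hmeas hnonneg hnorm
        (by positivity) ih fun x hx => hineq x ⟨?_, hx.2.trans (min_le_right _ _)⟩
      · refine (le_abs_self _).trans ((abs_min_sub_min_le_max _ _ _ _).trans ?_)
        simp [add_mul, abs_of_pos hδ, hδ.le, δ]
      · exact (le_min (by positivity) hT.le).trans hx.1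
  intro t ht
  obtain ⟨n, hn⟩ := exists_nat_ge (t / δ)
  exact hvanish n t ⟨ht.1, le_min ((div_le_iff₀ hδ).1 hn) ht.2⟩
end
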